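/- arXiv:0908.1159 — 2 statements merged into one kernel-verified Lean document; each statement's English description precedes it below -/
import Mathlib

section
/- BB(1) = 1: among all Turing machines with at most 1 state (in the model without a separate halting state) that halt on the all-zero tape, the maximum number of 1s in the computed word is exactly 1. -/
/-- Head movement directions. -/
inductive Dir : Type
  | left | stay | right

/-- Displacement of the head for each direction. -/
def Dir.move : Dir → ℤ
  | .left => -1
  | .stay => 0
  | .right => 1

/-- A configuration of a Turing machine with state type `Q`: current state,
head position and the two-way infinite binary tape. -/
structure Cfg (Q : Type) where
  state : Q
  head : ℤ
  tape : ℤ → Bool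

/-- One step of the machine with partial transition function `f`
(`none` if the machine halts, i.e. `f` is undefined on the current pair). -/
def stepTM {Q : Type} (f : Q × Bool → Option (Q × Bool × Dir)) (c : Cfg Q) :
    Option (Cfg Q) :=
  (f (c.state, c.tape c.head)).map fun qbd =>
    ⟨qbd.1, c.head + qbd.2.2.move, Function.update c.tape c.head qbd.2.1⟩

/-- Running `t` steps (returns `none` if the machine halts strictly before `t` steps). -/
def stepsTM {Q : Type} (f : Q × Bool → Option (Q × Bool × Dir)) :
    ℕ → Cfg Q → Option (Cfg Q)
  | 0, c => some c
  | t + 1, c => (stepTM f c).bind (stepsTM f t)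

/-- Initial configuration: initial state `q0`, head at `0`, all-zero tape. -/
def initCfg {Q : Type} (q0 : Q) : Cfg Q := ⟨q0, 0, fun _ => false⟩

/-- The machine is halted in configuration `c`: the transition function is
undefined on the current (state, symbol) pair. -/
def Halted {Q : Type} (f : Q × Bool → Option (Q × Bool × Dir)) (c : Cfg Q) : Prop :=
  f (c.state, c.tape c.head) = none

/-- `w` is the tape contents from the leftmost 1 to the rightmost 1
(the empty word if the tape contains no 1). -/
def TapeWord (tape : ℤ → Bool) (w : List Bool) : Prop :=
  ∃ i : ℤ,
    (∀ k : ℕ, k < w.length → w.getD k false = tape (i + k)) ∧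
    (∀ j : ℤ, tape j = true → i ≤ j ∧ j < i + w.length) ∧
    (w ≠ [] → w.getD 0 false = true ∧ w.getLastD false = true)

/-- The machine with transition function `f` and initial state `q0`, started on
the all-zero tape, halts after exactly `t` steps computing the word `w`. -/
def Computes {Q : Type} (f : Q × Bool → Option (Q × Bool × Dir)) (q0 : Q)
    (w : List Bool) (t : ℕ) : Prop :=
  ∃ c : Cfg Q, stepsTM f t (initCfg q0) = some c ∧ Halted f c ∧ TapeWord c.tape w

/-!
A one-state machine halts only on a symbol for which its single rule is undefined. If it
halts at once, the tape is blank. Otherwise its rule on a blank cell is defined, so it must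
halt on a `1`. A machine that moves left (right) on blank cells only ever sees blank cells
at and to the left (right) of its head, so it never halts. A machine that stays and writes
`0` loops on the initial configuration. The only remaining machine writes one `1` in place
and halts on it.
-/

section Invariant

variable {Q : Type} (f : Q × Bool → Option (Q × Bool × Dir))

theorem stepTM_eq_some_iff {c c' : Cfg Q} :
    stepTM f c = some c' ↔ ∃ q b d, f (c.state, c.tape c.head) = some (q, b, d) ∧
      c' = ⟨q, c.head + d.move, Function.update c.tape c.head b⟩ := by
  simp only [stepTM, Option.map_eq_some_iff, Prod.exists]
  exact exists₃_congr fun _ _ _ => and_congr_right fun _ => eq_comm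

theorem stepsTM_induction (P : Cfg Q → Prop)
    (hstep : ∀ c c', P c → stepTM f c = some c' → P c') :
    ∀ {t : ℕ} {c₀ c : Cfg Q}, P c₀ → stepsTM f t c₀ = some c → P c
  | 0, _, _, h₀, hc => by
    rw [stepsTM, Option.some_inj] at hc
    exact hc ▸ h₀
  | t + 1, c₀, _, h₀, hc => by
    rw [stepsTM, Option.bind_eq_some_iff] at hc
    obtain ⟨c₁, h₁, hc⟩ := hc
    exact stepsTM_induction P hstep (hstep c₀ c₁ h₀ h₁) hc

end Invariant

theorem TapeWord.count_true_le_one {tape : ℤ → Bool} {w : List Bool} {p : ℤ}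
    (hw : TapeWord tape w) (hp : ∀ j, tape j = true → j = p) : w.count true ≤ 1 := by
  obtain ⟨i, hget, -, hends⟩ := hw
  by_cases hne : w = []
  · simp [hne]
  obtain ⟨hfirst, hlast⟩ := hends hne
  have hlen : 0 < w.length := List.length_pos_iff.mpr hne
  rw [List.getLastD_eq_getLast?, List.getLast?_eq_getElem?, ← List.getD_eq_getElem?_getD]
    at hlast
  have hi : i + (0 : ℕ) = p := hp _ ((hget 0 hlen).symm.trans hfirst)
  have hi' : i + ((w.length - 1 : ℕ) : ℤ) = p := hp _ ((hget _ (by omega)).symm.trans hlast)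
  calc w.count true ≤ w.length := List.count_le_length
    _ = 1 := by omega

/-- The cells the head meets when it keeps moving in direction `d` are blank
(for `d = .stay`, the whole tape is blank). -/
def BlankAhead {Q : Type} (d : Dir) (c : Cfg Q) : Prop :=
  ∀ j, 0 ≤ d.move * (j - c.head) → c.tape j = false

theorem BlankAhead.tape_head {Q : Type} {d : Dir} {c : Cfg Q} (h : BlankAhead d c) :
    c.tape c.head = false :=
  h _ (by simp)

theorem BlankAhead.step {Q : Type} {d : Dir} {c : Cfg Q} (h : BlankAhead d c) (q : Q)
    {b : Bool} (hdb : d ≠ .stay ∨ b = false) :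
    BlankAhead d ⟨q, c.head + d.move, Function.update c.tape c.head b⟩ := by
  intro j hj
  by_cases hjh : j = c.head
  · subst hjh
    rcases hdb with hd | rfl
    · cases d <;> simp [Dir.move] at hj hd
    · exact Function.update_self ..
  · change Function.update c.tape c.head b j = false
    rw [Function.update_of_ne hjh]
    exact h j (by cases d <;> simp only [Dir.move] at hj ⊢ <;> omega)

theorem BlankAhead.stay_write_true {Q : Type} {c : Cfg Q} (h : BlankAhead .stay c) (j : ℤ) :
    Function.update c.tape c.head true j = true ↔ j = c.head := by
  by_cases hjh : j = c.head
  · simp [hjh]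
  · simp [h j (by simp [Dir.move]), hjh]

section OneState

variable {f : Fin 1 × Bool → Option (Fin 1 × Bool × Dir)} {t : ℕ} {c : Cfg (Fin 1)}

theorem tape_eq_blank_of_stepsTM_of_rule_eq_none (hf : f (0, false) = none)
    (hsteps : stepsTM f t (initCfg 0) = some c) : c.tape = fun _ => false := by
  have hinit : c = initCfg 0 := by
    refine stepsTM_induction f (· = initCfg 0) (fun c c' hc hc' => ?_) rfl hsteps
    subst hc
    simp [stepTM, initCfg, hf] at hc'
  rw [hinit, initCfg]

theorem blankAhead_or_single_of_stepsTM {q : Fin 1} {b : Bool} {d : Dir}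
    (hf₀ : f (0, false) = some (q, b, d)) (hf₁ : f (0, true) = none)
    (hsteps : stepsTM f t (initCfg 0) = some c) :
    BlankAhead d c ∨ ∀ j, c.tape j = true ↔ j = c.head := by
  refine stepsTM_induction f (fun c => BlankAhead d c ∨ ∀ j, c.tape j = true ↔ j = c.head)
    (fun c c' hc hc' => ?_) (Or.inl fun _ _ => rfl) hsteps
  rw [stepTM_eq_some_iff, Subsingleton.elim c.state 0] at hc'
  obtain ⟨q', b', d', hrule, rfl⟩ := hc'
  rcases hc with hblank | hsingle
  · rw [hblank.tape_head, hf₀, Option.some_inj, Prod.mk.injEq, Prod.mk.injEq] at hrule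
    obtain ⟨rfl, rfl, rfl⟩ := hrule
    by_cases hdb : d = .stay ∧ b = true
    · obtain ⟨rfl, rfl⟩ := hdb
      exact Or.inr fun j => by simpa [Dir.move] using hblank.stay_write_true j
    · exact Or.inl (hblank.step q (by cases b <;> simp_all))
  · rw [(hsingle c.head).mpr rfl, hf₁] at hrule
    cases hrule

theorem exists_tape_eq_true_imp_of_halts (hsteps : stepsTM f t (initCfg 0) = some c)
    (hhalt : Halted f c) : ∃ p, ∀ j, c.tape j = true → j = p := by
  rw [Halted, Subsingleton.elim c.state 0] at hhalt
  rcases hf₀ : f (0, false) with _ | ⟨q, b, d⟩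
  · rw [tape_eq_blank_of_stepsTM_of_rule_eq_none hf₀ hsteps]
    exact ⟨0, by simp⟩
  have hf₁ : f (0, true) = none := by
    cases hread : c.tape c.head <;> simp_all
  rcases blankAhead_or_single_of_stepsTM hf₀ hf₁ hsteps with hblank | hsingle
  · rw [hblank.tape_head, hf₀] at hhalt
    cases hhalt
  · exact ⟨c.head, fun j => (hsingle j).mp⟩

end OneState

def writeOneAndHalt : Fin 1 × Bool → Option (Fin 1 × Bool × Dir)
  | (_, false) => some (0, true, .stay)
  | (_, true) => none

theorem computes_writeOneAndHalt : Computes writeOneAndHalt 0 [true] 1 := by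
  refine ⟨⟨0, 0, Function.update (fun _ => false) 0 true⟩, ?_, ?_, 0, ?_, ?_, ?_⟩
  · simp [stepsTM, stepTM, initCfg, writeOneAndHalt, Dir.move]
  · simp [Halted, writeOneAndHalt]
  · intro k hk
    obtain rfl : k = 0 := by simpa using hk
    simp
  · intro j hj
    obtain rfl : j = 0 := by
      by_contra hj0
      simp [Function.update_of_ne hj0] at hj
    simp
  · simp

/-- BB(1) = 1: among all Turing machines with at most 1 states
(in the model without a separate halting state) that halt on the all-zero
tape, the maximum number of 1s in the computed word is exactly 1. -/
theorem busy_beaver_1 :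
    IsGreatest
      {m : ℕ |
        ∃ (f : Fin 1 × Bool → Option (Fin 1 × Bool × Dir)) (w : List Bool) (t : ℕ),
          Computes f 0 w t ∧ w.count true = m} 1 := by
  refine ⟨⟨writeOneAndHalt, [true], 1, computes_writeOneAndHalt, rfl⟩, ?_⟩
  rintro m ⟨f, w, t, ⟨c, hsteps, hhalt, hword⟩, rfl⟩
  obtain ⟨p, hp⟩ := exists_tape_eq_true_imp_of_halts hsteps hhalt
  exact hword.count_true_le_one hp
end

section
/- BB(5) ≥ 4097: there exists a Turing machine with at most 5 states (in the model without a separate halting state) that halts on the all-zero tape with a computed word containing at least 4097 ones. -/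
/-!
Let `onesCfg N` be the configuration in state `0` on a blank cell just left of a block `1ᴺ`, on an
otherwise blank tape. The machine runs right across the block, turns, and zigzags back, rewriting
`1³ᵏ` as `(001)ᵏ`; each later pass across the tape turns the leading `001` into five more ones.
Altogether `onesCfg (3k)` leads to `onesCfg (5k + 6)`, `onesCfg (3k + 1)` to `onesCfg (5k + 9)`,
and `onesCfg (3k + 2)` halts with `1 (001)ᵏ⁺¹ 1` on the tape, that is, with `k + 3` ones. From the
blank tape the machine reaches `onesCfg 6` in 15 steps; following
`6 ↦ 16 ↦ 34 ↦ ⋯ ↦ 7366 ↦ 12284 = 3 · 4094 + 2` it then halts with `4097` ones.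
-/

theorem replicate_append_cons_self {α : Type*} (n : ℕ) (a : α) (l : List α) :
    List.replicate n a ++ a :: l = List.replicate (n + 1) a ++ l := by
  simp [List.replicate_succ']

/-- A configuration up to translation: `left` lists the cells to the left of the head, nearest
first, and `right` the head cell followed by the cells to its right; all other cells are blank. -/
structure ListCfg (Q : Type) where
  state : Q
  left : List Bool
  right : List Bool

namespace ListCfg

variable {Q : Type} {f : Q × Bool → Option (Q × Bool × Dir)}

def toTape (p : ℤ) (L R : List Bool) (i : ℤ) : Bool :=
  if i < p then L.getD (p - 1 - i).toNat false else R.getD (i - p).toNat false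

def toCfg (c : ListCfg Q) (p : ℤ) : Cfg Q := ⟨c.state, p, toTape p c.left c.right⟩

def step (f : Q × Bool → Option (Q × Bool × Dir)) (c : ListCfg Q) : Option (ListCfg Q) :=
  (f (c.state, c.right.headD false)).map fun (q, b, d) =>
    match d with
    | .left => ⟨q, c.left.tail, c.left.headD false :: b :: c.right.tail⟩
    | .stay => ⟨q, c.left, b :: c.right.tail⟩
    | .right => ⟨q, b :: c.left, c.right.tail⟩

abbrev Reaches (f : Q × Bool → Option (Q × Bool × Dir)) : ListCfg Q → ListCfg Q → Prop :=
  Relation.ReflTransGen fun c d => step f c = some d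

def run (f : Q × Bool → Option (Q × Bool × Dir)) : ℕ → ListCfg Q → Option (ListCfg Q)
  | 0, c => some c
  | n + 1, c => (step f c).bind (run f n)

theorem toTape_self (p : ℤ) (L R : List Bool) : toTape p L R p = R.headD false := by
  simp [toTape, List.getD_eq_getElem?_getD, List.head?_eq_getElem?]

theorem update_toTape_left (p : ℤ) (L R : List Bool) (b : Bool) :
    Function.update (toTape p L R) p b = toTape (p - 1) L.tail (L.headD false :: b :: R.tail) := by
  funext i
  rcases lt_trichotomy i (p - 1) with h | rfl | h
  · rw [Function.update_of_ne (by omega)]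
    simp only [toTape, if_pos h, if_pos (show i < p by omega), List.getD_eq_getElem?_getD,
      List.getElem?_tail]
    congr 3; omega
  · simp [toTape, List.getD_eq_getElem?_getD, List.head?_eq_getElem?]
  · rcases eq_or_lt_of_le (show p ≤ i by omega) with rfl | h'
    · simp [toTape, List.getD_eq_getElem?_getD]
    · rw [Function.update_of_ne (by omega)]
      simp only [toTape, if_neg (show ¬ i < p by omega), if_neg (show ¬ i < p - 1 by omega),
        List.getD_eq_getElem?_getD]
      rw [show (i - (p - 1)).toNat = (i - p - 1).toNat + 2 by omega, List.getElem?_cons_succ,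
        List.getElem?_cons_succ, List.getElem?_tail]
      congr 3; omega

theorem update_toTape_stay (p : ℤ) (L R : List Bool) (b : Bool) :
    Function.update (toTape p L R) p b = toTape p L (b :: R.tail) := by
  funext i
  rcases lt_trichotomy i p with h | rfl | h
  · rw [Function.update_of_ne (by omega)]
    simp [toTape, h]
  · simp [toTape]
  · rw [Function.update_of_ne (by omega)]
    simp only [toTape, if_neg (show ¬ i < p by omega), List.getD_eq_getElem?_getD]
    rw [show (i - p).toNat = (i - p - 1).toNat + 1 by omega, List.getElem?_cons_succ,
      List.getElem?_tail]

theorem update_toTape_right (p : ℤ) (L R : List Bool) (b : Bool) :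
    Function.update (toTape p L R) p b = toTape (p + 1) (b :: L) R.tail := by
  funext i
  rcases lt_trichotomy i p with h | rfl | h
  · rw [Function.update_of_ne (by omega)]
    simp only [toTape, if_pos h, if_pos (show i < p + 1 by omega), List.getD_eq_getElem?_getD]
    rw [show (p + 1 - 1 - i).toNat = (p - 1 - i).toNat + 1 by omega, List.getElem?_cons_succ]
  · simp [toTape]
  · rw [Function.update_of_ne (by omega)]
    simp only [toTape, if_neg (show ¬ i < p by omega), if_neg (show ¬ i < p + 1 by omega),
      List.getD_eq_getElem?_getD, List.getElem?_tail]
    congr 3; omega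

theorem stepTM_toCfg {c d : ListCfg Q} (h : step f c = some d) (p : ℤ) :
    ∃ p', stepTM f (c.toCfg p) = some (d.toCfg p') := by
  obtain ⟨q, L, R⟩ := c
  simp only [step, Option.map_eq_some_iff] at h
  obtain ⟨⟨q', b, dir⟩, hf, rfl⟩ := h
  refine ⟨p + dir.move, ?_⟩
  simp only [stepTM, toCfg, toTape_self, hf, Option.map_some]
  cases dir
  · simp [Dir.move, update_toTape_left, sub_eq_add_neg]
  · simp [Dir.move, update_toTape_stay]
  · simp [Dir.move, update_toTape_right]

theorem Reaches.exists_stepsTM {c d : ListCfg Q} (h : Reaches f c d) (p : ℤ) :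
    ∃ p' t, stepsTM f t (c.toCfg p) = some (d.toCfg p') := by
  induction h using Relation.ReflTransGen.head_induction_on generalizing p with
  | refl => exact ⟨p, 0, rfl⟩
  | head hstep _ ih =>
    obtain ⟨p₁, h₁⟩ := stepTM_toCfg hstep p
    obtain ⟨p', t, ht⟩ := ih p₁
    exact ⟨p', t + 1, by simp [stepsTM, h₁, ht]⟩

theorem reaches_of_run_eq_some {n : ℕ} {c d : ListCfg Q} (h : run f n c = some d) :
    Reaches f c d := by
  induction n generalizing c with
  | zero => cases h; rfl
  | succ n ih =>
    obtain ⟨c', hc', h'⟩ := Option.bind_eq_some_iff.mp h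
    exact .head hc' (ih h')

theorem halted_toCfg {c : ListCfg Q} (h : f (c.state, c.right.headD false) = none) (p : ℤ) :
    Halted f (c.toCfg p) := by
  simpa [Halted, toCfg, toTape_self] using h

theorem toCfg_blank (q : Q) : (⟨q, [], []⟩ : ListCfg Q).toCfg 0 = initCfg q := by
  simp only [toCfg, initCfg, Cfg.mk.injEq, true_and]
  funext i
  simp [toTape]

theorem tapeWord_toCfg (q : Q) (n : ℕ) {w : List Bool} (h0 : w.head? = some true)
    (hl : w.getLast? = some true) (p : ℤ) :
    TapeWord ((⟨q, [], List.replicate n false ++ w⟩ : ListCfg Q).toCfg p).tape w := by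
  refine ⟨p + n, fun k hk => ?_, fun j hj => ?_, fun _ => ?_⟩
  · simp only [toCfg, toTape, if_neg (show ¬ p + n + k < p by omega),
      show (p + n + k - p).toNat = n + k by omega, List.getD_eq_getElem?_getD,
      List.getElem?_append_right (show (List.replicate n false).length ≤ n + k by simp)]
    simp
  · simp only [toCfg, toTape, List.getD_eq_getElem?_getD] at hj
    split_ifs at hj with hjp
    · simp at hj
    · rcases lt_or_ge (j - p).toNat n with h | h
      · simp [List.getElem?_append_left (show (j - p).toNat < (List.replicate n false).length by
          simpa), h] at hj
      · rw [List.getElem?_append_right (by simpa using h), List.length_replicate] at hj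
        have : (j - p).toNat - n < w.length := by
          by_contra hc
          rw [List.getElem?_eq_none (by omega)] at hj
          simp at hj
        omega
  · simp [List.getD_eq_getElem?_getD, ← List.head?_eq_getElem?, h0, List.getLastD_eq_getLast?, hl]

theorem reaches_sweep_right {q : Q} (hq : f (q, true) = some (q, true, .right))
    (n : ℕ) (L R : List Bool) :
    Reaches f ⟨q, L, List.replicate n true ++ R⟩ ⟨q, List.replicate n true ++ L, R⟩ := by
  induction n generalizing L with
  | zero => rfl
  | succ n ih =>
    rw [← replicate_append_cons_self n true L]
    have hstep : step f ⟨q, L, true :: (List.replicate n true ++ R)⟩ =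
        some ⟨q, true :: L, List.replicate n true ++ R⟩ := by
      simp [step, hq]
    exact .head hstep (ih (true :: L))

theorem reaches_sweep_left {q : Q} (hq : f (q, true) = some (q, true, .left))
    (n : ℕ) (L R : List Bool) :
    Reaches f ⟨q, List.replicate n true ++ L, true :: R⟩
      ⟨q, L, List.replicate (n + 1) true ++ R⟩ := by
  induction n generalizing R with
  | zero => rfl
  | succ n ih =>
    have hstep : step f ⟨q, true :: (List.replicate n true ++ L), true :: R⟩ =
        some ⟨q, List.replicate n true ++ L, true :: true :: R⟩ := by
      simp [step, hq]
    have hsweep := ih (true :: R)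
    rw [replicate_append_cons_self] at hsweep
    exact .head hstep hsweep

end ListCfg

open ListCfg

def M : Fin 5 × Bool → Option (Fin 5 × Bool × Dir)
  | (0, false) => some (1, true, .right)
  | (0, true)  => some (2, true, .left)
  | (1, false) => some (2, true, .right)
  | (1, true)  => some (1, true, .right)
  | (2, false) => some (3, true, .right)
  | (2, true)  => some (4, false, .left)
  | (3, false) => some (0, true, .left)
  | (3, true)  => some (3, true, .left)
  | (4, false) => none
  | (4, true)  => some (0, false, .left)

local notation:50 c:51 " ⟶* " d:51 => Reaches M c d

/-- `blocks k R` is the word `(001)ᵏ R`. -/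
def blocks : ℕ → List Bool → List Bool
  | 0, R => R
  | k + 1, R => blocks k (false :: false :: true :: R)

theorem blocks_succ' (k : ℕ) (R : List Bool) :
    blocks (k + 1) R = false :: false :: true :: blocks k R := by
  induction k generalizing R with
  | zero => rfl
  | succ k ih => exact ih _

theorem blocks_eq_append (k : ℕ) (R : List Bool) : blocks k R = blocks k [] ++ R := by
  induction k generalizing R with
  | zero => rfl
  | succ k ih => simp only [blocks]; rw [ih, ih [false, false, true]]; simp

theorem count_true_blocks (k : ℕ) (R : List Bool) :
    (blocks k R).count true = k + R.count true := by
  induction k generalizing R with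
  | zero => simp [blocks]
  | succ k ih => simp [blocks, ih]; omega

theorem reaches_zigzag (k : ℕ) (L R : List Bool) :
    ⟨0, List.replicate (3 * k) true ++ L, true :: R⟩ ⟶* ⟨0, L, true :: blocks k R⟩ := by
  induction k generalizing R with
  | zero => rfl
  | succ k ih =>
    rw [show 3 * (k + 1) = 3 * k + 3 by ring]
    exact .trans (reaches_of_run_eq_some (n := 3) rfl) (ih _)

theorem reaches_pass (a : ℕ) (R : List Bool) :
    ⟨0, [], false :: List.replicate a true ++ false :: false :: true :: R⟩ ⟶*
      ⟨0, [], false :: List.replicate (a + 5) true ++ R⟩ :=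
  calc _ ⟶* ⟨1, [true], List.replicate a true ++ false :: false :: true :: R⟩ := .single rfl
    _ ⟶* ⟨1, List.replicate a true ++ [true], false :: false :: true :: R⟩ :=
        reaches_sweep_right rfl a [true] _
    _ ⟶* ⟨3, List.replicate (a + 2) true ++ [true], true :: R⟩ :=
        reaches_of_run_eq_some (n := 2) rfl
    _ ⟶* ⟨3, [true], List.replicate (a + 3) true ++ R⟩ := reaches_sweep_left rfl (a + 2) [true] R
    _ ⟶* _ := reaches_of_run_eq_some (n := 3) rfl

theorem reaches_passes (n a : ℕ) (R : List Bool) :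
    ⟨0, [], false :: List.replicate a true ++ blocks n R⟩ ⟶*
      ⟨0, [], false :: List.replicate (a + 5 * n) true ++ R⟩ := by
  induction n generalizing R with
  | zero => rfl
  | succ n ih =>
    rw [show a + 5 * (n + 1) = a + 5 * n + 5 by ring]
    exact (ih _).trans (reaches_pass _ R)

def onesCfg (N : ℕ) : ListCfg (Fin 5) := ⟨0, [], false :: List.replicate N true⟩

theorem reaches_turn (N : ℕ) : onesCfg N ⟶* ⟨0, List.replicate (N + 2) true, [true, true]⟩ := by
  have hsweep := reaches_sweep_right (f := M) (q := 1) rfl N [true] []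
  rw [replicate_append_cons_self, List.append_nil, List.append_nil] at hsweep
  exact .head rfl (hsweep.trans (reaches_of_run_eq_some (n := 3) rfl))

theorem reaches_onesCfg_three_mul (k : ℕ) : onesCfg (3 * k) ⟶* onesCfg (5 * k + 6) :=
  calc _ ⟶* ⟨0, List.replicate (3 * k + 2) true, [true, true]⟩ := reaches_turn _
    _ ⟶* ⟨0, [true, true], true :: blocks k [true]⟩ := by
        simpa [List.replicate_add] using reaches_zigzag k (List.replicate 2 true) [true]
    _ ⟶* ⟨0, [], false :: List.replicate 0 true ++ blocks (k + 1) [true]⟩ := by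
        rw [blocks_succ']; exact reaches_of_run_eq_some (n := 3) rfl
    _ ⟶* ⟨0, [], false :: List.replicate (0 + 5 * (k + 1)) true ++ [true]⟩ :=
        reaches_passes _ _ _
    _ = onesCfg (5 * k + 6) := by
        simp only [onesCfg, List.cons_append, ← List.replicate_succ']; ring_nf

theorem reaches_onesCfg_three_mul_add_one (k : ℕ) : onesCfg (3 * k + 1) ⟶* onesCfg (5 * k + 9) :=
  calc _ ⟶* ⟨0, List.replicate (3 * k + 1 + 2) true, [true, true]⟩ := reaches_turn _
    _ ⟶* ⟨0, [], true :: blocks (k + 1) [true]⟩ := by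
        simpa [mul_add] using reaches_zigzag (k + 1) [] [true]
    _ ⟶* ⟨0, [], false :: List.replicate 3 true ++ blocks (k + 1) [true]⟩ :=
        reaches_of_run_eq_some (n := 5) rfl
    _ ⟶* ⟨0, [], false :: List.replicate (3 + 5 * (k + 1)) true ++ [true]⟩ :=
        reaches_passes _ _ _
    _ = onesCfg (5 * k + 9) := by
        simp only [onesCfg, List.cons_append, ← List.replicate_succ']; ring_nf

theorem reaches_halt (k : ℕ) :
    onesCfg (3 * k + 2) ⟶* ⟨4, [], false :: false :: true :: blocks (k + 1) [true]⟩ :=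
  calc _ ⟶* ⟨0, List.replicate (3 * k + 2 + 2) true, [true, true]⟩ := reaches_turn _
    _ ⟶* ⟨0, [true], true :: blocks (k + 1) [true]⟩ := by
        simpa [mul_add, List.replicate_add] using reaches_zigzag (k + 1) [true] [true]
    _ ⟶* _ := reaches_of_run_eq_some (n := 2) rfl

def nextOnes (N : ℕ) : ℕ := if N % 3 = 0 then 5 * (N / 3) + 6 else 5 * (N / 3) + 9

theorem reaches_onesCfg_nextOnes {N : ℕ} (hN : N % 3 ≠ 2) :
    onesCfg N ⟶* onesCfg (nextOnes N) := by
  obtain ⟨k, rfl | rfl⟩ : ∃ k, N = 3 * k ∨ N = 3 * k + 1 := ⟨N / 3, by omega⟩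
  · simpa [nextOnes] using reaches_onesCfg_three_mul k
  · simpa [nextOnes, Nat.add_mod, Nat.add_div] using reaches_onesCfg_three_mul_add_one k

theorem reaches_onesCfg_iterate_nextOnes (n N : ℕ) (h : ∀ i < n, nextOnes^[i] N % 3 ≠ 2) :
    onesCfg N ⟶* onesCfg (nextOnes^[n] N) := by
  induction n with
  | zero => rfl
  | succ n ih =>
    rw [Function.iterate_succ_apply']
    exact (ih fun i hi => h i (by omega)).trans (reaches_onesCfg_nextOnes (h n (by omega)))

/-- BB(5) ≥ 4097: there exists a Turing machine with at most 5
states (in the model without a separate halting state) that halts on the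
all-zero tape with a computed word containing at least 4097 ones. -/
theorem busy_beaver_5_lower_bound :
    ∃ (f : Fin 5 × Bool → Option (Fin 5 × Bool × Dir)) (w : List Bool) (t : ℕ),
      Computes f 0 w t ∧ 4097 ≤ w.count true := by
  have hrun : ⟨0, [], []⟩ ⟶* ⟨4, [], false :: false :: true :: blocks 4095 [true]⟩ :=
    calc _ ⟶* onesCfg 6 := reaches_of_run_eq_some (n := 15) rfl
      _ ⟶* onesCfg (nextOnes^[13] 6) := reaches_onesCfg_iterate_nextOnes 13 6 (by decide)
      _ = onesCfg (3 * 4094 + 2) := congrArg onesCfg (by decide)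
      _ ⟶* _ := reaches_halt 4094
  obtain ⟨p, t, ht⟩ := hrun.exists_stepsTM 0
  refine ⟨M, true :: blocks 4095 [true], t,
    ⟨_, toCfg_blank (0 : Fin 5) ▸ ht, halted_toCfg rfl p, tapeWord_toCfg 4 2 rfl ?_ p⟩, ?_⟩
  · rw [blocks_eq_append, ← List.cons_append, List.getLast?_concat]
  · simp [count_true_blocks]
end
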